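/- Let E be a topological graph, Y a closed subset of E^0_rg, and E_Y the associated topological graph. For every continuous function h : E_Y^0 → ℂ vanishing at infinity, there exist continuous functions f, g : E^0 → ℂ vanishing at infinity such that g vanishes on E^0 \ E^0_rg, h(v) = f(v) + g(v) for all v ∈ E^0 ⊆ E_Y^0, and h(ω(v)) = f(v) for all v ∈ Y. -/

import Mathlib

open Set Filter OnePoint

namespace TopGraphAux

/-- `E⁰_sce`: the open set of sources of a topological graph. -/
def graphSce {E0 E1 : Type*} [TopologicalSpace E0] (r : E1 → E0) : Set E0 :=
  (closure (Set.range r))ᶜ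

/-- `E⁰_fin`: vertices having a neighborhood whose `r`-preimage is compact. -/
def graphFin {E0 E1 : Type*} [TopologicalSpace E0] [TopologicalSpace E1] (r : E1 → E0) :
    Set E0 :=
  {v | ∃ V ∈ nhds v, IsCompact (r ⁻¹' V)}

/-- `E⁰_rg`: the open set of regular vertices of a topological graph. -/
def graphRg {E0 E1 : Type*} [TopologicalSpace E0] [TopologicalSpace E1] (r : E1 → E0) :
    Set E0 :=
  graphFin r \ closure (graphSce r)

/-- A factor map from the topological graph `F = (F0, F1, dF, rF)` to the topological graph
`E = (E0, E1, dE, rE)`: a pair of continuous maps between one-point compactifications sending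
`∞` to `∞`, intertwining range and domain maps, and with the unique edge-lifting property. -/
structure IsFactorMap {E0 E1 F0 F1 : Type*}
    [TopologicalSpace E0] [TopologicalSpace E1] [TopologicalSpace F0] [TopologicalSpace F1]
    (dE rE : E1 → E0) (dF rF : F1 → F0)
    (m0 : OnePoint F0 → OnePoint E0) (m1 : OnePoint F1 → OnePoint E1) : Prop where
  continuous_m0 : Continuous m0
  continuous_m1 : Continuous m1
  map_infty0 : m0 ∞ = ∞
  map_infty1 : m1 ∞ = ∞
  compat : ∀ (e : F1) (e' : E1), m1 ↑e = ↑e' →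
    (↑(rE e') : OnePoint E0) = m0 ↑(rF e) ∧ (↑(dE e') : OnePoint E0) = m0 ↑(dF e)
  lift : ∀ (e' : E1) (v : F0), (↑(dE e') : OnePoint E0) = m0 ↑v →
    ∃! e : F1, m1 ↑e = (↑e' : OnePoint E1) ∧ dF e = v

/-- Regularity of a factor map: every vertex mapping to a regular vertex receives an edge,
and all edges it receives are mapped to genuine edges. -/
def IsRegularFactorMap {E0 E1 F0 F1 : Type*}
    [TopologicalSpace E0] [TopologicalSpace E1] [TopologicalSpace F0] [TopologicalSpace F1]
    (rE : E1 → E0) (rF : F1 → F0)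
    (m0 : OnePoint F0 → OnePoint E0) (m1 : OnePoint F1 → OnePoint E1) : Prop :=
  ∀ (v : F0) (w : E0), m0 ↑v = ↑w → w ∈ graphRg rE →
    (∃ e : F1, rF e = v) ∧ ∀ e : F1, rF e = v → ∃ e' : E1, m1 ↑e = ↑e'

/-- `f` restricts to a homeomorphism from `U` onto `V`. -/
def IsHomeoOn {X Y : Type*} [TopologicalSpace X] [TopologicalSpace Y]
    (f : X → Y) (U : Set X) (V : Set Y) : Prop :=
  ∃ h : U ≃ₜ V, ∀ x : U, (h x : Y) = f (x : X)

/-- Extension of a map `A → OnePoint B` to the one-point compactification, sending `∞` to `∞`. -/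
def onePointLift {A B : Type*} (f : A → OnePoint B) : OnePoint A → OnePoint B :=
  fun x => Option.elim x ∞ f

/-- The relation identifying the copy in `S` of each point of `B ⊆ S` with the corresponding
point of `X`. -/
def glueRel {X : Type*} (S B : Set X) : (X ⊕ ↥S) → (X ⊕ ↥S) → Prop :=
  fun a b => ∃ x : ↥S, (x : X) ∈ B ∧
    ((a = Sum.inl ↑x ∧ b = Sum.inr x) ∨ (a = Sum.inr x ∧ b = Sum.inl ↑x))

/-- The space `X ⨿_B S` obtained from `X ⊔ S` by identifying the two copies of each point
of `B ⊆ S ⊆ X`. -/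
def Glue (X : Type*) (S B : Set X) : Type _ := Quot (glueRel S B)

instance {X : Type*} [TopologicalSpace X] (S B : Set X) : TopologicalSpace (Glue X S B) :=
  inferInstanceAs (TopologicalSpace (Quot _))

/-- The canonical inclusion `X → X ⨿_B S`. -/
def Glue.inl {X : Type*} {S B : Set X} (x : X) : Glue X S B := Quot.mk _ (Sum.inl x)

/-- The inclusion of the extra copy `S → X ⨿_B S`. -/
def Glue.inr {X : Type*} {S B : Set X} (x : ↥S) : Glue X S B := Quot.mk _ (Sum.inr x)

/-- The extension `d_Y` of the domain map `d` to the graph `E_Y`. -/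
def glueD {E0 E1 : Type*} [TopologicalSpace E0] (d : E1 → E0) (Y : Set E0) :
    Glue E1 (d ⁻¹' closure Y) (d ⁻¹' (closure Y \ Y)) → Glue E0 (closure Y) (closure Y \ Y) :=
  Quot.lift
    (Sum.elim (fun e => Glue.inl (d e)) (fun e => Glue.inr ⟨d e.1, e.2⟩))
    (by
      rintro a b ⟨x, hx, (⟨rfl, rfl⟩ | ⟨rfl, rfl⟩)⟩
      · exact Quot.sound ⟨⟨d x.1, x.2⟩, hx, Or.inl ⟨rfl, rfl⟩⟩
      · exact (Quot.sound ⟨⟨d x.1, x.2⟩, hx, Or.inl ⟨rfl, rfl⟩⟩).symm)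

/-- The extension `r_Y` of the range map `r` to the graph `E_Y`. -/
def glueR {E0 E1 : Type*} [TopologicalSpace E0] (d r : E1 → E0) (Y : Set E0) :
    Glue E1 (d ⁻¹' closure Y) (d ⁻¹' (closure Y \ Y)) → Glue E0 (closure Y) (closure Y \ Y) :=
  Quot.lift (Sum.elim (fun e => Glue.inl (r e)) (fun e => Glue.inl (r e.1)))
    (by rintro a b ⟨x, hx, (⟨rfl, rfl⟩ | ⟨rfl, rfl⟩)⟩ <;> rfl)

/-- The projection from the glued space back onto the original space. -/
def glueProj {X : Type*} (S B : Set X) : Glue X S B → X :=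
  Quot.lift (Sum.elim id Subtype.val)
    (by rintro a b ⟨x, hx, (⟨rfl, rfl⟩ | ⟨rfl, rfl⟩)⟩ <;> rfl)

/-- A point of the projective limit `E^i = Ẽ^i \ {∞}`: a compatible thread of points of the
one-point compactifications, not all equal to `∞`. -/
structure LimPt {Λ : Type*} [Preorder Λ] (X : Λ → Type*)
    (m : ∀ ⦃l l' : Λ⦄, l ≤ l' → OnePoint (X l') → OnePoint (X l)) where
  pt : ∀ l, OnePoint (X l)
  compat : ∀ ⦃l l' : Λ⦄ (h : l ≤ l'), m h (pt l') = pt l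
  exists_ne_infty : ∃ l, pt l ≠ ∞

instance {Λ : Type*} [Preorder Λ] (X : Λ → Type*) [∀ l, TopologicalSpace (X l)]
    (m : ∀ ⦃l l' : Λ⦄, l ≤ l' → OnePoint (X l') → OnePoint (X l)) :
    TopologicalSpace (LimPt X m) :=
  TopologicalSpace.induced LimPt.pt inferInstance

/-- Topological freeness: the set of base points of loops without entrances has empty
interior. -/
def IsTopologicallyFree {E0 E1 : Type*} [TopologicalSpace E0] (d r : E1 → E0) : Prop :=
  interior {v : E0 | ∃ (n : ℕ) (hn : 0 < n) (e : Fin n → E1),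
      (∀ k : Fin n, d (e k) = r (e ⟨(k.1 + 1) % n, Nat.mod_lt _ hn⟩)) ∧
      (∀ (k : Fin n) (e' : E1), r e' = r (e k) → e' = e k) ∧
      r (e ⟨0, hn⟩) = v} = ∅

open scoped Classical in
/-- Partial iteration of a partially defined map `σ` with domain `W`:
`sgdsIter σ n x = some y` iff `x ∈ dom (σ^n)` and `σ^n x = y`. -/
noncomputable def sgdsIter {X : Type*} {W : Set X} (σ : ↥W → X) : ℕ → X → Option X
  | 0, x => Option.some x
  | n + 1, x => if h : x ∈ W then sgdsIter σ n (σ ⟨x, h⟩) else none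

end TopGraphAux

/-! The difference `h(v) - h(ω(v))` on `closure Y` vanishes on `∂Y`, where the two copies of a
vertex are identified, so it extends by zero to the closed set `closure Y ∪ (E⁰ \ E⁰_rg)`.
A Tietze extension `g` of this function through the one-point compactification of `E⁰` vanishes
at infinity, and `f = h|_{E⁰} - g`. -/

universe u

open Topology

theorem Topology.IsClosedEmbedding.exists_continuous_tendsto_cocompact_comp_eq
    {A : Type*} {X : Type u} {Z : Type*} [TopologicalSpace A] [TopologicalSpace X]
    [TopologicalSpace Z] [T2Space X] [LocallyCompactSpace X] [TietzeExtension.{u} Z]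
    {i : A → X} (hi : IsClosedEmbedding i) {f : A → Z} (hf : Continuous f) {z : Z}
    (hfz : Tendsto f (cocompact A) (𝓝 z)) :
    ∃ g : X → Z, Continuous g ∧ Tendsto g (cocompact X) (𝓝 z) ∧ g ∘ i = f := by
  have : T2Space A := hi.isEmbedding.t2Space
  let F : C(OnePoint A, Z) :=
    OnePoint.continuousMapMk ⟨f, hf⟩ z (by rwa [coclosedCompact_eq_cocompact])
  have hmap : IsClosedEmbedding (OnePoint.map i) :=
    (OnePoint.continuous_map hi.continuous (by simpa using hi.tendsto_cocompact)).isClosedEmbedding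
      (Option.map_injective hi.injective)
  obtain ⟨G, hG⟩ := F.exists_extension' hmap
  refine ⟨G ∘ (↑), G.continuous.comp OnePoint.continuous_coe, ?_, ?_⟩
  · have hGinf : G ∞ = z := congrFun hG ∞
    simpa [hGinf] using (G.continuous.tendsto ∞).comp OnePoint.tendsto_coe_infty
  · exact funext fun a => congrFun hG a

theorem IsClosed.exists_continuous_tendsto_cocompact_eqOn
    {X : Type u} {Z : Type*} [TopologicalSpace X] [TopologicalSpace Z]
    [T2Space X] [LocallyCompactSpace X] [TietzeExtension.{u} Z]
    {s : Set X} (hs : IsClosed s) {φ : X → Z} (hφ : ContinuousOn φ s) {z : Z}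
    (hφz : Tendsto φ (cocompact X ⊓ 𝓟 s) (𝓝 z)) :
    ∃ g : X → Z, Continuous g ∧ Tendsto g (cocompact X) (𝓝 z) ∧ EqOn g φ s := by
  have hval : Tendsto ((↑) : s → X) (cocompact s) (cocompact X ⊓ 𝓟 s) :=
    tendsto_inf.2 ⟨hs.isClosedEmbedding_subtypeVal.tendsto_cocompact,
      tendsto_principal.2 (Eventually.of_forall Subtype.prop)⟩
  obtain ⟨g, hg, hgz, hgφ⟩ :=
    hs.isClosedEmbedding_subtypeVal.exists_continuous_tendsto_cocompact_comp_eq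
      hφ.domRestrict (hφz.comp hval)
  exact ⟨g, hg, hgz, fun x hx => congrFun hgφ ⟨x, hx⟩⟩

theorem tendsto_cocompact_of_leftInverse {α β : Type*} [TopologicalSpace α] [TopologicalSpace β]
    {q : α → β} {p : β → α} (hp : Continuous p) (hpq : Function.LeftInverse p q) :
    Tendsto q (cocompact α) (cocompact β) := by
  refine hasBasis_cocompact.tendsto_right_iff.2 fun K hK => ?_
  filter_upwards [(hK.image hp).compl_mem_cocompact] with x hx hxK
  exact hx ⟨q x, hxK, hpq x⟩

namespace TopGraphAux

theorem isOpen_graphFin {E0 E1 : Type*} [TopologicalSpace E0] [TopologicalSpace E1]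
    (r : E1 → E0) : IsOpen (graphFin r) := by
  refine isOpen_iff_mem_nhds.2 fun v ⟨V, hV, hc⟩ => ?_
  filter_upwards [eventually_eventually_nhds.2 hV] with w hw using ⟨V, hw, hc⟩

theorem isOpen_graphRg {E0 E1 : Type*} [TopologicalSpace E0] [TopologicalSpace E1]
    (r : E1 → E0) : IsOpen (graphRg r) :=
  (isOpen_graphFin r).sdiff isClosed_closure

namespace Glue

variable {X : Type*} {S B : Set X}

theorem inl_eq_inr {x : S} (hx : (x : X) ∈ B) : (inl x : Glue X S B) = inr x :=
  Quot.sound ⟨x, hx, Or.inl ⟨rfl, rfl⟩⟩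

open scoped Classical in
/-- The section of `glueProj` that picks the extra copy over `S`. -/
noncomputable def inrOfMem (S B : Set X) (x : X) : Glue X S B :=
  if hx : x ∈ S then inr ⟨x, hx⟩ else inl x

theorem inrOfMem_of_mem {x : X} (hx : x ∈ S) : inrOfMem S B x = inr ⟨x, hx⟩ :=
  dif_pos hx

theorem inrOfMem_eq_inl {x : X} (hx : x ∈ S → x ∈ B) : inrOfMem S B x = inl x := by
  by_cases hxS : x ∈ S
  · rw [inrOfMem_of_mem hxS]
    exact (inl_eq_inr (x := ⟨x, hxS⟩) (hx hxS)).symm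
  · exact dif_neg hxS

variable [TopologicalSpace X]

theorem continuous_inl : Continuous (inl : X → Glue X S B) :=
  continuous_quot_mk.comp _root_.continuous_inl

theorem continuous_inr : Continuous (inr : S → Glue X S B) :=
  continuous_quot_mk.comp _root_.continuous_inr

theorem continuous_glueProj : Continuous (glueProj S B) :=
  continuous_quot_lift _ (continuous_id.sumElim continuous_subtype_val)

theorem tendsto_inl_cocompact : Tendsto (inl : X → Glue X S B) (cocompact X) (cocompact _) :=
  tendsto_cocompact_of_leftInverse continuous_glueProj fun _ => rfl

theorem tendsto_inrOfMem_cocompact :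
    Tendsto (inrOfMem S B) (cocompact X) (cocompact _) := by
  refine tendsto_cocompact_of_leftInverse continuous_glueProj fun x => ?_
  unfold inrOfMem
  split_ifs <;> rfl

theorem continuousOn_inrOfMem : ContinuousOn (inrOfMem S B) S := by
  rw [continuousOn_iff_continuous_domRestrict]
  convert (continuous_inr : Continuous (inr : S → Glue X S B)) using 1
  exact funext fun x => inrOfMem_of_mem x.2

end Glue

theorem statement8_general
    {E0 E1 : Type*} [TopologicalSpace E0] [TopologicalSpace E1]
    [T2Space E0] [LocallyCompactSpace E0]
    (r : E1 → E0)
    (Y : Set E0) (hY : Y ⊆ graphRg r)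
    (h : Glue E0 (closure Y) (closure Y \ Y) → ℂ)
    (hcont : Continuous h)
    (hinf : Filter.Tendsto h (Filter.cocompact (Glue E0 (closure Y) (closure Y \ Y))) (nhds 0)) :
    ∃ f g : E0 → ℂ, Continuous f ∧ Continuous g ∧
      Filter.Tendsto f (Filter.cocompact E0) (nhds 0) ∧
      Filter.Tendsto g (Filter.cocompact E0) (nhds 0) ∧
      (∀ v : E0, v ∉ graphRg r → g v = 0) ∧
      (∀ v : E0, h (Glue.inl v) = f v + g v) ∧
      (∀ (v : E0) (hv : v ∈ Y), h (Glue.inr ⟨v, subset_closure hv⟩) = f v) := by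
  set φ : E0 → ℂ := fun v => h (Glue.inl v) - h (Glue.inrOfMem _ _ v)
  have hφ_eq_zero : ∀ v ∉ graphRg r, φ v = 0 := fun v hv => by
    have hv_boundary : v ∈ closure Y → v ∈ closure Y \ Y :=
      fun hvY => ⟨hvY, fun hvY' => hv (hY hvY')⟩
    simp only [φ, Glue.inrOfMem_eq_inl hv_boundary, sub_self]
  have hφ_cont : ContinuousOn φ (closure Y ∪ (graphRg r)ᶜ) :=
    ((hcont.comp Glue.continuous_inl).continuousOn.sub
      (hcont.comp_continuousOn Glue.continuousOn_inrOfMem)).union_of_isClosed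
      (continuousOn_const.congr hφ_eq_zero) isClosed_closure (isOpen_graphRg r).isClosed_compl
  have hinl : Tendsto (fun v => h (Glue.inl v)) (cocompact E0) (𝓝 0) :=
    hinf.comp Glue.tendsto_inl_cocompact
  have hφ_tendsto : Tendsto φ (cocompact E0) (𝓝 0) := by
    simpa using hinl.sub (hinf.comp Glue.tendsto_inrOfMem_cocompact)
  have hclosed : IsClosed (closure Y ∪ (graphRg r)ᶜ) :=
    isClosed_closure.union (isOpen_graphRg r).isClosed_compl
  obtain ⟨g, hg, hg0, hgφ⟩ :=
    hclosed.exists_continuous_tendsto_cocompact_eqOn hφ_cont (hφ_tendsto.mono_left inf_le_left)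
  refine ⟨fun v => h (Glue.inl v) - g v, g, (hcont.comp Glue.continuous_inl).sub hg, hg,
    by simpa using hinl.sub hg0, hg0, fun v hv => (hgφ (Or.inr hv)).trans (hφ_eq_zero v hv),
    fun v => (sub_add_cancel _ _).symm, fun v hv => ?_⟩
  change _ = h (Glue.inl v) - g v
  rw [hgφ (Or.inl (subset_closure hv))]
  simp only [φ, Glue.inrOfMem_of_mem (subset_closure hv), sub_sub_cancel]

/-- For a topological graph `E`, a closed subset `Y` of `E⁰_rg`, and a
continuous function `h : E_Y⁰ → ℂ` vanishing at infinity, there are continuous functions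
`f, g : E⁰ → ℂ` vanishing at infinity such that `g` vanishes outside `E⁰_rg`,
`h(v) = f(v) + g(v)` for `v ∈ E⁰` and `h(ω(v)) = f(v)` for `v ∈ Y`. -/
theorem statement8
    {E0 E1 : Type*} [TopologicalSpace E0] [TopologicalSpace E1]
    [T2Space E0] [T2Space E1] [LocallyCompactSpace E0] [LocallyCompactSpace E1]
    (d r : E1 → E0) (hd : IsLocalHomeomorph d) (hr : Continuous r)
    (Y : Set E0) (hY : Y ⊆ graphRg r) (hYc : closure Y ∩ graphRg r = Y)
    (h : Glue E0 (closure Y) (closure Y \ Y) → ℂ)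
    (hcont : Continuous h)
    (hinf : Filter.Tendsto h (Filter.cocompact (Glue E0 (closure Y) (closure Y \ Y))) (nhds 0)) :
    ∃ f g : E0 → ℂ, Continuous f ∧ Continuous g ∧
      Filter.Tendsto f (Filter.cocompact E0) (nhds 0) ∧
      Filter.Tendsto g (Filter.cocompact E0) (nhds 0) ∧
      (∀ v : E0, v ∉ graphRg r → g v = 0) ∧
      (∀ v : E0, h (Glue.inl v) = f v + g v) ∧
      (∀ (v : E0) (hv : v ∈ Y), h (Glue.inr ⟨v, subset_closure hv⟩) = f v) :=
  statement8_general r Y hY h hcont hinf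

end TopGraphAux
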